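/- For every integer d with 1 ≤ d ≤ 2(q−1), the all-ones vector (1,…,1) ∈ F_qⁿ does not belong to PRM_d(q,2). -/
import Mathlib


open MvPolynomial

/-- The fixed representatives of the points of the projective plane over `F`:
the leftmost nonzero coordinate equals 1. -/
def stdRep (F : Type*) [Field F] : Set (Fin 3 → F) :=
  {v | v 0 = 1 ∨ (v 0 = 0 ∧ v 1 = 1) ∨ (v 0 = 0 ∧ v 1 = 0 ∧ v 2 = 1)}

/-- The evaluation map at the fixed representatives. -/
noncomputable def ev (F : Type*) [Field F] :
    MvPolynomial (Fin 3) F →ₗ[F] (stdRep F → F) :=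
  LinearMap.pi fun Q => (aeval (Q : Fin 3 → F)).toLinearMap

/-- The projective Reed–Muller code of degree `d` over the projective plane. -/
noncomputable def PRM (F : Type*) [Field F] (d : ℕ) : Submodule F (stdRep F → F) :=
  (homogeneousSubmodule (Fin 3) F d).map (ev F)

section Aux

variable {F : Type*} [Field F]

private lemma degree_sum_eq (d : Fin 3 →₀ ℕ) : ∑ i : Fin 3, d i = d.degree :=
  (Finset.sum_subset (Finset.subset_univ _)
    (fun i _ hi => Finsupp.notMem_support_iff.mp hi)).symm

private lemma homog_degree_eq {g : MvPolynomial (Fin 3) F} {D : ℕ}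
    (hg : g.IsHomogeneous D) {m : Fin 3 →₀ ℕ} (hm : m ∈ g.support) :
    ∑ i : Fin 3, m i = D := by
  rw [degree_sum_eq, Finsupp.degree_eq_weight_one]
  exact hg (mem_support_iff.mp hm)

private lemma eval_smul_homog {g : MvPolynomial (Fin 3) F} {D : ℕ}
    (hg : g.IsHomogeneous D) (c : F) (v : Fin 3 → F) :
    eval (c • v) g = c ^ D * eval v g := by
  rw [eval_eq', eval_eq', Finset.mul_sum]
  refine Finset.sum_congr rfl fun m hm => ?_
  have hD : ∑ i : Fin 3, m i = D := homog_degree_eq hg hm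
  have : ∏ i : Fin 3, (c • v) i ^ m i = c ^ D * ∏ i : Fin 3, v i ^ m i := by
    calc ∏ i : Fin 3, (c • v) i ^ m i = ∏ i : Fin 3, (c ^ m i * v i ^ m i) := by
          refine Finset.prod_congr rfl fun i _ => ?_
          simp [mul_pow]
      _ = (∏ i : Fin 3, c ^ m i) * ∏ i : Fin 3, v i ^ m i := Finset.prod_mul_distrib
      _ = c ^ D * ∏ i : Fin 3, v i ^ m i := by
          rw [Finset.prod_pow_eq_pow_sum, hD]
  rw [this]; ring

variable [Fintype F]

private lemma sum_eval_eq_zero {g : MvPolynomial (Fin 3) F} {D : ℕ}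
    (hg : g.IsHomogeneous D) (hD : D < 3 * (Fintype.card F - 1)) :
    ∑ v : Fin 3 → F, eval v g = 0 := by
  classical
  simp_rw [eval_eq']
  rw [Finset.sum_comm]
  refine Finset.sum_eq_zero fun m hm => ?_
  rw [← Finset.mul_sum]
  have hsum : ∑ v : Fin 3 → F, ∏ i : Fin 3, v i ^ m i
      = ∏ i : Fin 3, ∑ x : F, x ^ m i :=
    (Fintype.prod_sum fun i x => x ^ m i).symm
  have hex : ∃ i : Fin 3, m i < Fintype.card F - 1 := by
    by_contra h
    push_neg at h
    have h1 : 3 * (Fintype.card F - 1) ≤ ∑ i : Fin 3, m i := by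
      calc 3 * (Fintype.card F - 1) = ∑ _i : Fin 3, (Fintype.card F - 1) := by
            simp [Finset.sum_const, Finset.card_univ, mul_comm]
        _ ≤ ∑ i : Fin 3, m i := Finset.sum_le_sum fun i _ => h i
    have h2 := homog_degree_eq hg hm
    omega
  obtain ⟨i, hi⟩ := hex
  rw [hsum, Finset.prod_eq_zero (Finset.mem_univ i)
    (FiniteField.sum_pow_lt_card_sub_one F _ hi), mul_zero]

private lemma eval_zero_homog {g : MvPolynomial (Fin 3) F} {D : ℕ}
    (hg : g.IsHomogeneous D) (hD : D ≠ 0) : eval (0 : Fin 3 → F) g = 0 := by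
  rw [show (eval (0 : Fin 3 → F)) g = constantCoeff g from congrFun (congrArg _ eval_zero) g]
  exact hg.coeff_eq_zero (by simpa [Finsupp.degree] using Ne.symm hD)

/-- Explicit enumeration of the standard representatives. -/
private def rho (F : Type*) [Field F] : (F × F) ⊕ (F ⊕ Unit) → (Fin 3 → F)
  | .inl (a, b) => ![1, a, b]
  | .inr (.inl b) => ![0, 1, b]
  | .inr (.inr _) => ![0, 0, 1]

private lemma rho_mem (t : (F × F) ⊕ (F ⊕ Unit)) : rho F t ∈ stdRep F := by
  rcases t with ⟨a, b⟩ | b | u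
  · exact Or.inl rfl
  · exact Or.inr (Or.inl ⟨rfl, rfl⟩)
  · exact Or.inr (Or.inr ⟨rfl, rfl, rfl⟩)

end Aux

set_option maxHeartbeats 2000000 in
/-- For `1 ≤ d ≤ 2(q−1)`, the all-ones vector does not belong to
`PRM_d(q,2)`. -/
theorem stmt2 {F : Type*} [Field F] [Fintype F] (q d : ℕ) (hq : Fintype.card F = q)
    (hd1 : 1 ≤ d) (hd2 : d ≤ 2 * (q - 1)) :
    (fun _ : stdRep F => (1 : F)) ∉ PRM F d := by
  classical
  subst hq
  intro hmem
  obtain ⟨f, hf, hev⟩ := Submodule.mem_map.mp hmem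
  rw [mem_homogeneousSubmodule] at hf
  have hfeval : ∀ v : Fin 3 → F, v ∈ stdRep F → eval v f = 1 := by
    intro v hv
    have h1 : aeval v f = (1 : F) := congrFun hev ⟨v, hv⟩
    rw [aeval_def, Algebra.algebraMap_self, eval₂_id] at h1
    exact h1
  set m := Fintype.card F - 1 with hm
  have hq2 : 2 ≤ Fintype.card F := Fintype.one_lt_card
  have hm0 : 0 < m := by omega
  set e := (m - d % m) % m with he
  have he_lt : e < m := Nat.mod_lt _ hm0
  have hdm : m * (d / m) + d % m = d := Nat.div_add_mod d m
  have hdmod : d % m < m := Nat.mod_lt _ hm0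
  have hdvd : m ∣ d + e := by
    apply Nat.dvd_of_mod_eq_zero
    rw [Nat.add_mod, Nat.mod_eq_of_lt he_lt]
    rcases Nat.eq_zero_or_pos (d % m) with h0 | h0
    · have he0 : e = 0 := by rw [he, h0, Nat.sub_zero, Nat.mod_self]
      rw [h0, he0, Nat.add_zero, Nat.zero_mod]
    · have he1 : e = m - d % m := by
        rw [he]; exact Nat.mod_eq_of_lt (by omega)
      rw [he1, Nat.add_sub_cancel' hdmod.le, Nat.mod_self]
  set g := f * (X 2 : MvPolynomial (Fin 3) F) ^ e with hgdef
  have hgh : g.IsHomogeneous (d + e) := by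
    have := hf.mul ((isHomogeneous_X F (2 : Fin 3)).pow e)
    simpa [one_mul] using this
  -- The full sum vanishes.
  have hA : ∑ v : Fin 3 → F, eval v g = 0 :=
    sum_eval_eq_zero hgh (by omega)
  -- The value of the summand on a scaled representative.
  have hval : ∀ (u : Fˣ) (t : (F × F) ⊕ (F ⊕ Unit)),
      eval ((u : F) • rho F t) g = (u : F) ^ (d + e) * (rho F t 2) ^ e := by
    intro u t
    rw [eval_smul_homog hgh]
    have : eval (rho F t) g = (rho F t 2) ^ e := by
      rw [hgdef, map_mul, map_pow, eval_X, hfeval _ (rho_mem t), one_mul]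
    rw [this]
  -- sum over nonzero vectors
  have hbij : ∑ p : Fˣ × ((F × F) ⊕ (F ⊕ Unit)), (p.1 : F) ^ (d + e) * (rho F p.2 2) ^ e
      = ∑ v ∈ Finset.univ.erase (0 : Fin 3 → F), eval v g := by
    refine Finset.sum_nbij (fun p => (p.1 : F) • rho F p.2) ?_ ?_ ?_ ?_
    · rintro ⟨u, t⟩ -
      refine Finset.mem_erase.mpr ⟨?_, Finset.mem_univ _⟩
      intro h0
      rcases t with ⟨a, b⟩ | b | w
      · have := congrFun h0 0
        simp [rho] at this
      · have := congrFun h0 1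
        simp [rho] at this
      · have := congrFun h0 2
        simp [rho] at this
    · rintro ⟨u, t⟩ - ⟨u', t'⟩ - h
      rcases t with ⟨a, b⟩ | b | w <;> rcases t' with ⟨a', b'⟩ | b' | w'
      · have h0 : (u : F) = u' := by simpa [rho] using congrFun h 0
        have h1 : (u : F) * a = u' * a' := by simpa [rho] using congrFun h 1
        have h2 : (u : F) * b = u' * b' := by simpa [rho] using congrFun h 2
        rw [← h0] at h1 h2
        obtain rfl : a = a' := mul_left_cancel₀ u.ne_zero h1
        obtain rfl : b = b' := mul_left_cancel₀ u.ne_zero h2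
        exact Prod.ext (Units.ext h0) rfl
      · exact absurd (by simpa [rho] using congrFun h 0) u.ne_zero
      · exact absurd (by simpa [rho] using congrFun h 0) u.ne_zero
      · exact absurd (show (u' : F) = 0 by simpa [rho] using (congrFun h 0).symm) u'.ne_zero
      · have h1 : (u : F) = u' := by simpa [rho] using congrFun h 1
        have h2 : (u : F) * b = u' * b' := by simpa [rho] using congrFun h 2
        rw [← h1] at h2
        obtain rfl : b = b' := mul_left_cancel₀ u.ne_zero h2
        exact Prod.ext (Units.ext h1) rfl
      · exact absurd (by simpa [rho] using congrFun h 1) u.ne_zero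
      · exact absurd (show (u' : F) = 0 by simpa [rho] using (congrFun h 0).symm) u'.ne_zero
      · exact absurd (show (u' : F) = 0 by simpa [rho] using (congrFun h 1).symm) u'.ne_zero
      · have h2 : (u : F) = u' := by simpa [rho] using congrFun h 2
        exact Prod.ext (Units.ext h2) rfl
    · rintro v hv
      have hv0 : v ≠ 0 := (Finset.mem_erase.mp hv).1
      by_cases h0 : v 0 ≠ 0
      · refine ⟨(Units.mk0 (v 0) h0, Sum.inl ((v 0)⁻¹ * v 1, (v 0)⁻¹ * v 2)), Finset.mem_coe.mpr (Finset.mem_univ _), ?_⟩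
        funext i
        fin_cases i <;>
          simp [rho, Units.smul_def, Units.mk0, mul_comm, h0]
      push_neg at h0
      by_cases h1 : v 1 ≠ 0
      · refine ⟨(Units.mk0 (v 1) h1, Sum.inr (Sum.inl ((v 1)⁻¹ * v 2))), Finset.mem_coe.mpr (Finset.mem_univ _), ?_⟩
        funext i
        fin_cases i <;>
          simp [rho, Units.smul_def, Units.mk0, mul_comm, h0, h1]
      push_neg at h1
      have h2 : v 2 ≠ 0 := by
        intro h2
        apply hv0
        funext i
        fin_cases i <;> assumption
      refine ⟨(Units.mk0 (v 2) h2, Sum.inr (Sum.inr ())), Finset.mem_coe.mpr (Finset.mem_univ _), ?_⟩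
      funext i
      fin_cases i <;> simp [rho, Units.smul_def, Units.mk0, h0, h1]
    · rintro ⟨u, t⟩ -
      exact (hval u t).symm
  -- evaluate the structured sum
  have hunits : ∑ u : Fˣ, (u : F) ^ (d + e) = -1 := by
    have := FiniteField.sum_pow_units F (d + e)
    rw [if_pos hdvd] at this
    simpa using this
  have hS : ∑ t : (F × F) ⊕ (F ⊕ Unit), (rho F t 2) ^ e = 1 := by
    rw [Fintype.sum_sum_type, Fintype.sum_sum_type]
    have hFe : ∑ x : F, x ^ e = 0 := FiniteField.sum_pow_lt_card_sub_one F e he_lt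
    have h1 : ∑ p : F × F, (rho F (Sum.inl p) 2) ^ e = 0 := by
      have : ∀ p : F × F, (rho F (Sum.inl p) 2) ^ e = p.2 ^ e := by
        rintro ⟨a, b⟩; rfl
      simp_rw [this]
      rw [Fintype.sum_prod_type]
      simp [hFe]
    have h2 : ∑ b : F, (rho F (Sum.inr (Sum.inl b)) 2) ^ e = 0 := by
      have : ∀ b : F, (rho F (Sum.inr (Sum.inl b)) 2) ^ e = b ^ e := fun b => rfl
      simp_rw [this, hFe]
    rw [h1, h2]
    simp [rho]
  have hzero : eval (0 : Fin 3 → F) g = 0 := eval_zero_homog hgh (by omega)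
  have hsplit := Finset.add_sum_erase Finset.univ (fun v => eval v g)
    (Finset.mem_univ (0 : Fin 3 → F))
  have hErase : ∑ v ∈ Finset.univ.erase (0 : Fin 3 → F), eval v g = 0 := by
    have : eval (0 : Fin 3 → F) g + ∑ v ∈ Finset.univ.erase (0 : Fin 3 → F), eval v g = 0 := by
      rw [hsplit]; exact hA
    rw [hzero, zero_add] at this
    exact this
  have hfinal : (-1 : F) = 0 := by
    calc (-1 : F) = (∑ u : Fˣ, (u : F) ^ (d + e)) *
          (∑ t : (F × F) ⊕ (F ⊕ Unit), (rho F t 2) ^ e) := by rw [hunits, hS, neg_mul, one_mul]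
      _ = ∑ p : Fˣ × ((F × F) ⊕ (F ⊕ Unit)), (p.1 : F) ^ (d + e) * (rho F p.2 2) ^ e := by
          rw [Fintype.sum_prod_type, Finset.sum_mul]
          refine Finset.sum_congr rfl fun u _ => ?_
          rw [Finset.mul_sum]
      _ = 0 := by rw [hbij, hErase]
  exact one_ne_zero (neg_eq_zero.mp hfinal)
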